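/- arXiv:2605.08921 — 5 statements merged into one kernel-verified Lean document; each statement's English description precedes it below -/
import Mathlib

section
/- Let N ≥ 5 be odd and ρ = (N-2+√(N(N-4)))/2, ω = e^{2πi/N}. Then ∏_{j=1}^{N-1} ((N-2) + ω^j + ω^{-j}) = (ρ^N + 1)² / (ρ^{N-1} (ρ+1)²). -/
open Complex Real

theorem stmt_7 (N : ℕ) (hodd : Odd N) (hN : 5 ≤ N)
    (ω : ℂ) (hω : ω = Complex.exp (2 * π * I / N))
    (ρ : ℝ) (hρ : ρ = ((N : ℝ) - 2 + Real.sqrt (N * (N - 4))) / 2) :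
    ∏ j ∈ Finset.Icc 1 (N - 1), (((N : ℂ) - 2) + ω ^ j + ω ^ (-(j : ℤ)))
      = ((ρ : ℂ) ^ N + 1) ^ 2 / ((ρ : ℂ) ^ (N - 1) * ((ρ : ℂ) + 1) ^ 2) := by
  have hNR : (5 : ℝ) ≤ (N : ℝ) := by exact_mod_cast hN
  have hNpos : 0 < N := by omega
  have hs : Real.sqrt ((N : ℝ) * ((N : ℝ) - 4)) ^ 2 = (N : ℝ) * ((N : ℝ) - 4) :=
    Real.sq_sqrt (by nlinarith)
  have hsnn : 0 ≤ Real.sqrt ((N : ℝ) * ((N : ℝ) - 4)) := Real.sqrt_nonneg _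
  have hρpos : 0 < ρ := by rw [hρ]; nlinarith
  have hρeq : ρ ^ 2 + 1 = ((N : ℝ) - 2) * ρ := by rw [hρ]; nlinarith [hs]
  have hρeqC : (ρ : ℂ) ^ 2 + 1 = ((N : ℂ) - 2) * (ρ : ℂ) := by
    exact_mod_cast congrArg (Complex.ofReal) hρeq
  have hρ0 : (ρ : ℂ) ≠ 0 := by exact_mod_cast hρpos.ne'
  have hρ1 : (ρ : ℂ) + 1 ≠ 0 := by
    have : (0:ℝ) < ρ + 1 := by linarith
    intro h
    have := congrArg Complex.re h
    simp at this
    linarith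
  have hωprim : IsPrimitiveRoot ω N := by
    rw [hω]; exact Complex.isPrimitiveRoot_exp N hNpos.ne'
  have hω0 : ω ≠ 0 := hωprim.ne_zero hNpos.ne'
  have hωN : ω ^ N = 1 := hωprim.pow_eq_one
  -- full product over range N
  have hprod : ∀ x : ℂ, ∏ i ∈ Finset.range N, (x - ω ^ i) = x ^ N - 1 := by
    intro x
    have h := congrArg (Polynomial.eval x)
      (X_pow_sub_C_eq_prod hωprim hNpos (one_pow N)).symm
    simpa [Polynomial.eval_prod] using h
  have hP : ∏ i ∈ Finset.range N, ((ρ : ℂ) + ω ^ i) = (ρ : ℂ) ^ N + 1 := by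
    have h := hprod (-(ρ : ℂ))
    have h2 : ∏ i ∈ Finset.range N, (-(ρ : ℂ) - ω ^ i)
        = ∏ i ∈ Finset.range N, (-1) * ((ρ : ℂ) + ω ^ i) :=
      Finset.prod_congr rfl fun i _ => by ring
    rw [h2, Finset.prod_mul_distrib, Finset.prod_const, Finset.card_range,
      hodd.neg_one_pow, hodd.neg_pow] at h
    linear_combination -h
  -- restrict to Icc 1 (N-1)
  have hIcc : Finset.Icc 1 (N - 1) = Finset.Ico 1 N := by
    rw [← Finset.Ico_add_one_right_eq_Icc]
    congr 1
    omega
  set A : ℂ := ∏ j ∈ Finset.Icc 1 (N - 1), ((ρ : ℂ) + ω ^ j) with hA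
  have h1 : ((ρ : ℂ) + 1) * A = (ρ : ℂ) ^ N + 1 := by
    rw [hA, hIcc, ← hP, Finset.prod_range_eq_mul_Ico _ hNpos, pow_zero]
  -- reindex second product
  have hinv : ∀ j ∈ Finset.Icc 1 (N - 1), ω ^ (-(j : ℤ)) = ω ^ (N - j) := by
    intro j hj
    simp only [Finset.mem_Icc] at hj
    rw [zpow_neg, zpow_natCast]
    exact inv_eq_of_mul_eq_one_right (by
      rw [← pow_add, Nat.add_sub_cancel' (by omega : j ≤ N), hωN])
  have h2 : ∏ j ∈ Finset.Icc 1 (N - 1), ((ρ : ℂ) + ω ^ (-(j : ℤ))) = A := by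
    rw [Finset.prod_congr rfl fun j hj => by rw [hinv j hj]]
    rw [hA]
    refine Finset.prod_nbij' (fun j => N - j) (fun j => N - j) ?_ ?_ ?_ ?_ ?_
    · intro a ha; simp only [Finset.mem_Icc] at *; omega
    · intro a ha; simp only [Finset.mem_Icc] at *; omega
    · intro a ha; simp only [Finset.mem_Icc] at ha; show N - (N - a) = a; omega
    · intro a ha; simp only [Finset.mem_Icc] at ha; show N - (N - a) = a; omega
    · intro a ha; rfl
  -- factor identity
  have hcard : (Finset.Icc 1 (N - 1)).card = N - 1 := by
    rw [Nat.card_Icc]; omega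
  have h3 : (∏ j ∈ Finset.Icc 1 (N - 1), (((N : ℂ) - 2) + ω ^ j + ω ^ (-(j : ℤ))))
      * (ρ : ℂ) ^ (N - 1) = A * A := by
    have hfac : ∀ j ∈ Finset.Icc 1 (N - 1),
        (((N : ℂ) - 2) + ω ^ j + ω ^ (-(j : ℤ))) * (ρ : ℂ)
          = ((ρ : ℂ) + ω ^ j) * ((ρ : ℂ) + ω ^ (-(j : ℤ))) := by
      intro j hj
      have hjinv : ω ^ j * ω ^ (-(j : ℤ)) = 1 := by
        rw [zpow_neg, zpow_natCast]
        field_simp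
      linear_combination -hρeqC - hjinv
    calc (∏ j ∈ Finset.Icc 1 (N - 1), (((N : ℂ) - 2) + ω ^ j + ω ^ (-(j : ℤ))))
          * (ρ : ℂ) ^ (N - 1)
        = (∏ j ∈ Finset.Icc 1 (N - 1), (((N : ℂ) - 2) + ω ^ j + ω ^ (-(j : ℤ))))
          * ∏ _j ∈ Finset.Icc 1 (N - 1), (ρ : ℂ) := by rw [Finset.prod_const, hcard]
      _ = ∏ j ∈ Finset.Icc 1 (N - 1),
            ((((N : ℂ) - 2) + ω ^ j + ω ^ (-(j : ℤ))) * (ρ : ℂ)) :=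
          (Finset.prod_mul_distrib).symm
      _ = ∏ j ∈ Finset.Icc 1 (N - 1),
            (((ρ : ℂ) + ω ^ j) * ((ρ : ℂ) + ω ^ (-(j : ℤ)))) := Finset.prod_congr rfl hfac
      _ = A * ∏ j ∈ Finset.Icc 1 (N - 1), ((ρ : ℂ) + ω ^ (-(j : ℤ))) :=
          Finset.prod_mul_distrib
      _ = A * A := by rw [h2]
  -- finish
  have hρpow : (ρ : ℂ) ^ (N - 1) ≠ 0 := pow_ne_zero _ hρ0
  rw [eq_div_iff (mul_ne_zero hρpow (pow_ne_zero 2 hρ1))]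
  calc (∏ j ∈ Finset.Icc 1 (N - 1), (((N : ℂ) - 2) + ω ^ j + ω ^ (-(j : ℤ))))
        * ((ρ : ℂ) ^ (N - 1) * ((ρ : ℂ) + 1) ^ 2)
      = ((∏ j ∈ Finset.Icc 1 (N - 1), (((N : ℂ) - 2) + ω ^ j + ω ^ (-(j : ℤ))))
        * (ρ : ℂ) ^ (N - 1)) * ((ρ : ℂ) + 1) ^ 2 := by ring
    _ = (A * A) * ((ρ : ℂ) + 1) ^ 2 := by rw [h3]
    _ = (((ρ : ℂ) + 1) * A) * (((ρ : ℂ) + 1) * A) := by ring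
    _ = ((ρ : ℂ) ^ N + 1) ^ 2 := by rw [h1]; ring
end

section
/- Let N ≥ 5 be odd and ρ = (N-2+√(N(N-4)))/2. Then (1/N) ∏_{j=1}^{N-1} ((N-2) + 2 cos(2πj/N)) = (ρ^N + 1)² / (N ρ^{N-1} (ρ+1)²). -/
open Real Finset Polynomial

theorem stmt_8 (N : ℕ) (hodd : Odd N) (hN : 5 ≤ N)
    (ρ : ℝ) (hρ : ρ = ((N : ℝ) - 2 + Real.sqrt (N * (N - 4))) / 2) :
    (1 / (N : ℝ)) * ∏ j ∈ Finset.Icc 1 (N - 1),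
        (((N : ℝ) - 2) + 2 * Real.cos (2 * π * j / N))
      = (ρ ^ N + 1) ^ 2 / ((N : ℝ) * ρ ^ (N - 1) * (ρ + 1) ^ 2) := by
  have hN5 : (5 : ℝ) ≤ (N : ℝ) := by exact_mod_cast hN
  have hNpos : 0 < N := by omega
  have hN0 : N ≠ 0 := by omega
  have hsnn : 0 ≤ Real.sqrt ((N : ℝ) * ((N : ℝ) - 4)) := Real.sqrt_nonneg _
  have hρpos : 0 < ρ := by rw [hρ]; linarith
  have hs : Real.sqrt ((N : ℝ) * ((N : ℝ) - 4)) ^ 2 = (N : ℝ) * ((N : ℝ) - 4) := by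
    rw [sq]; exact Real.mul_self_sqrt (by nlinarith)
  have hquad : ρ ^ 2 + 1 = ((N : ℝ) - 2) * ρ := by
    rw [hρ]; linear_combination hs / 4
  -- complex setup
  set ζ : ℂ := Complex.exp (2 * π * Complex.I / N) with hζdef
  have hprim : IsPrimitiveRoot ζ N := Complex.isPrimitiveRoot_exp N hN0
  have hζN : ζ ^ N = 1 := hprim.pow_eq_one
  set c : ℕ → ℂ := fun j => (ρ : ℂ) + ζ ^ j with hc
  -- product over range N
  have hpoly := X_pow_sub_C_eq_prod hprim hNpos (one_pow N)
  have hprod0 : ∏ j ∈ range N, c j = (ρ : ℝ) ^ N + 1 := by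
    have := congrArg (Polynomial.eval (-(ρ : ℂ))) hpoly
    simp only [eval_sub, eval_pow, eval_X, eval_C, eval_prod, eval_mul, mul_one] at this
    have hodd' : (-(ρ:ℂ)) ^ N = -((ρ:ℂ)) ^ N := hodd.neg_pow _
    rw [hodd'] at this
    have h2 : ∏ j ∈ range N, (-(ρ:ℂ) - ζ ^ j) = (-1) ^ N * ∏ j ∈ range N, c j := by
      calc ∏ j ∈ range N, (-(ρ:ℂ) - ζ ^ j) = ∏ j ∈ range N, (-1 * c j) :=
            Finset.prod_congr rfl fun j _ => by simp [hc]; ring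
        _ = (-1) ^ N * ∏ j ∈ range N, c j := by
            rw [Finset.prod_mul_distrib, Finset.prod_const, Finset.card_range]
    rw [h2, hodd.neg_one_pow] at this
    push_cast
    linear_combination this
  have hρ1 : (ρ : ℂ) + 1 ≠ 0 := by
    intro h
    have := congrArg Complex.re h
    simp at this; linarith
  have hρc : (ρ : ℂ) ≠ 0 := by exact_mod_cast ne_of_gt hρpos
  have hIcc : Finset.Icc 1 (N - 1) = Finset.Ico 1 N := by
    rw [← Finset.Ico_add_one_right_eq_Icc]; congr 1; omega
  have hprod1 : ∏ j ∈ Finset.Icc 1 (N - 1), c j = ((ρ : ℂ) ^ N + 1) / ((ρ : ℂ) + 1) := by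
    rw [hIcc]
    have h0 : ∏ j ∈ Finset.Ico 0 N, c j = c 0 * ∏ j ∈ Finset.Ico 1 N, c j :=
      Finset.prod_eq_prod_Ico_succ_bot hNpos c
    rw [← Finset.range_eq_Ico, hprod0] at h0
    have hc0 : c 0 = (ρ : ℂ) + 1 := by simp [hc]
    rw [hc0] at h0
    field_simp
    linear_combination -h0
  have hquadC : ((ρ:ℂ)) ^ 2 + 1 = ((N : ℂ) - 2) * ρ := by exact_mod_cast hquad
  have key : ∀ j ∈ Finset.Icc 1 (N - 1),
      ((((N : ℝ) - 2) + 2 * Real.cos (2 * π * j / N) : ℝ) : ℂ) = c j * c (N - j) / ρ := by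
    intro j hj
    simp only [Finset.mem_Icc] at hj
    have hsum : ζ ^ j * ζ ^ (N - j) = 1 := by
      rw [← pow_add, show j + (N - j) = N by omega, hζN]
    have hzj : ζ ^ j = Complex.exp (((2 * π * j / N : ℝ) : ℂ) * Complex.I) := by
      rw [hζdef, ← Complex.exp_nat_mul]
      congr 1
      have : (N : ℂ) ≠ 0 := by exact_mod_cast hN0
      push_cast
      field_simp
    have hzNj : ζ ^ (N - j) = Complex.exp (-(((2 * π * j / N : ℝ) : ℂ) * Complex.I)) := by
      have h1 : ζ ^ (N - j) = (ζ ^ j)⁻¹ := eq_inv_of_mul_eq_one_right (mul_comm (ζ ^ j) (ζ ^ (N - j)) ▸ hsum)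
      rw [h1, hzj, ← Complex.exp_neg]
    have h2cos : ζ ^ j + ζ ^ (N - j) = ((2 * Real.cos (2 * π * j / N) : ℝ) : ℂ) := by
      rw [hzj, hzNj]
      push_cast [Complex.ofReal_cos]
      rw [Complex.two_cos]
      ring
    push_cast at h2cos
    rw [eq_div_iff hρc]
    simp only [hc]
    push_cast
    linear_combination (-1 : ℂ) * hquadC - (ρ:ℂ) * h2cos - hsum
  have hcard : (Finset.Icc 1 (N - 1)).card = N - 1 := by rw [Nat.card_Icc]; omega
  have hrev : ∏ j ∈ Finset.Icc 1 (N - 1), c (N - j) = ∏ j ∈ Finset.Icc 1 (N - 1), c j := by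
    apply Finset.prod_nbij' (fun j => N - j) (fun j => N - j) <;>
      intro a ha <;> simp only [Finset.mem_Icc] at * <;> omega
  have hmain : ((∏ j ∈ Finset.Icc 1 (N - 1),
        (((N : ℝ) - 2) + 2 * Real.cos (2 * π * j / N)) : ℝ) : ℂ)
      = ((ρ:ℂ) ^ N + 1) ^ 2 / (((ρ:ℂ) + 1) ^ 2 * (ρ:ℂ) ^ (N - 1)) := by
    rw [Complex.ofReal_prod, Finset.prod_congr rfl key, Finset.prod_div_distrib,
      Finset.prod_mul_distrib, hrev, hprod1, Finset.prod_const, hcard]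
    have hρpow : (ρ:ℂ) ^ (N - 1) ≠ 0 := pow_ne_zero _ hρc
    field_simp
  have hfin : (∏ j ∈ Finset.Icc 1 (N - 1), (((N : ℝ) - 2) + 2 * Real.cos (2 * π * j / N)))
      = (ρ ^ N + 1) ^ 2 / ((ρ + 1) ^ 2 * ρ ^ (N - 1)) := by exact_mod_cast hmain
  rw [hfin]
  have hNne : (N : ℝ) ≠ 0 := by positivity
  have h1 : ρ + 1 ≠ 0 := by positivity
  have h2 : ρ ^ (N - 1) ≠ 0 := pow_ne_zero _ (ne_of_gt hρpos)
  field_simp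
end

section
/- Let N ≥ 5 be odd, ρ = (N-2+√(N(N-4)))/2, Δ = √(N(N-4)), and let q be an integer with 1 ≤ q ≤ N-1. Then (1/N) ∑_{j=1}^{N-1} 2(1 - cos(2πjq/N)) / ((N-2) + 2cos(2πj/N)) = (2/(Δ(ρ^N+1))) (ρ^N - 1 + (-1)^q (ρ^q - ρ^{N-q})). -/
open Real Finset


private lemma dvd_eq_self (N m : ℕ) (h : N ∣ m) (h1 : 0 < m) (h2 : m < 2*N) : m = N := by
  obtain ⟨c, rfl⟩ := h
  rcases Nat.lt_or_ge c 2 with hc | hc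
  · interval_cases c <;> omega
  · have h3 : N * 2 ≤ N * c := Nat.mul_le_mul_left N hc
    exact absurd h2 (by nlinarith)

private lemma aux_orth (N : ℕ) (hN0 : N ≠ 0) (m : ℕ) :
    ∑ j ∈ Finset.range N, (Complex.exp (2 * ↑Real.pi * Complex.I / ↑N) ^ j) ^ m
      = if N ∣ m then (N : ℂ) else 0 := by
  have hζ := Complex.isPrimitiveRoot_exp N hN0
  set ζ := Complex.exp (2 * ↑Real.pi * Complex.I / ↑N) with hζdef
  have h1 : ∀ j : ℕ, (ζ ^ j) ^ m = (ζ ^ m) ^ j := fun j => by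
    rw [← pow_mul, mul_comm, pow_mul]
  simp_rw [h1]
  by_cases h : N ∣ m
  · rw [if_pos h, (hζ.pow_eq_one_iff_dvd m).mpr h]
    simp
  · rw [if_neg h]
    have hne : ζ ^ m ≠ 1 := fun he => h ((hζ.pow_eq_one_iff_dvd m).mp he)
    rw [geom_sum_eq hne]
    have hpow : (ζ ^ m) ^ N = 1 := by
      rw [← pow_mul, mul_comm, pow_mul, hζ.pow_eq_one, one_pow]
    rw [hpow]
    simp

private lemma aux_key (N : ℕ) (hodd : Odd N) (R w : ℂ) (hR : R ≠ 0) (hw : w ^ N = 1) :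
    (R + R⁻¹ + (w + w⁻¹)) *
        ∑ k ∈ Finset.range N, (-1 : ℂ) ^ k * (R ^ (N - k) - R ^ k) * w ^ k
      = (R - R⁻¹) * (R ^ N + 1) := by
  have hN0 : N ≠ 0 := hodd.pos.ne'
  have hw0 : w ≠ 0 := by
    intro h
    rw [h, zero_pow hN0] at hw
    exact one_ne_zero hw.symm
  have hsplit : ∑ k ∈ Finset.range N, (-1 : ℂ) ^ k * (R ^ (N - k) - R ^ k) * w ^ k
      = (∑ k ∈ Finset.range N, (-1 : ℂ) ^ k * R ^ (N - k) * w ^ k)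
        - ∑ k ∈ Finset.range N, (-(R * w)) ^ k := by
    rw [← Finset.sum_sub_distrib]
    apply Finset.sum_congr rfl
    intro k _
    have h : (-(R * w)) ^ k = (-1 : ℂ) ^ k * R ^ k * w ^ k := by
      rw [show -(R * w) = (-1 : ℂ) * R * w by ring, mul_pow, mul_pow]
    rw [h]
    ring
  have G1 : (w + R) * (∑ k ∈ Finset.range N, (-1 : ℂ) ^ k * R ^ (N - k) * w ^ k)
      = R ^ (N + 1) + R := by
    have tele := Finset.sum_range_sub (fun k => (-1 : ℂ) ^ (k + 1) * R ^ (N + 1 - k) * w ^ k) N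
    have hstep : ∑ k ∈ Finset.range N,
        ((fun k => (-1 : ℂ) ^ (k + 1) * R ^ (N + 1 - k) * w ^ k) (k + 1)
          - (fun k => (-1 : ℂ) ^ (k + 1) * R ^ (N + 1 - k) * w ^ k) k)
        = ∑ k ∈ Finset.range N, (w + R) * ((-1 : ℂ) ^ k * R ^ (N - k) * w ^ k) := by
      apply Finset.sum_congr rfl
      intro k hk
      simp only [Finset.mem_range] at hk
      have e1 : N + 1 - (k + 1) = N - k := by omega
      have e2 : N + 1 - k = (N - k) + 1 := by omega
      simp only [e1, e2]
      rw [pow_succ (-1 : ℂ) (k + 1), pow_succ (-1 : ℂ) k, pow_succ R (N - k), pow_succ w k]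
      ring
    rw [hstep] at tele
    rw [Finset.mul_sum, tele]
    have hfN : (-1 : ℂ) ^ (N + 1) = 1 := Even.neg_one_pow (by exact hodd.add_one)
    simp only [hfN, hw, Nat.add_sub_cancel_left, Nat.sub_zero, pow_zero, pow_one]
    ring
  have G2 : (1 + R * w) * (∑ k ∈ Finset.range N, (-(R * w)) ^ k) = R ^ N + 1 := by
    have hg := geom_sum_mul (-(R * w)) N
    have hpow : (-(R * w)) ^ N = -(R ^ N) := by
      rw [hodd.neg_pow, mul_pow, hw, mul_one]
    rw [hpow] at hg
    linear_combination -hg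
  have hRw : R * w ≠ 0 := mul_ne_zero hR hw0
  apply mul_left_cancel₀ hRw
  rw [hsplit]
  have hD : R * w * (R + R⁻¹ + (w + w⁻¹)) = (w + R) * (1 + R * w) := by
    field_simp
    ring
  have hD2 : R * w * ((R - R⁻¹) * (R ^ N + 1)) = (R ^ 2 - 1) * w * (R ^ N + 1) := by
    field_simp
  have hRinv : R * R⁻¹ = 1 := mul_inv_cancel₀ hR
  linear_combination ((∑ k ∈ Finset.range N, (-1 : ℂ) ^ k * R ^ (N - k) * w ^ k)
      - ∑ k ∈ Finset.range N, (-(R * w)) ^ k) * hD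
    + (1 + R * w) * G1 - (w + R) * G2 + hD2 + 2 * w * (R ^ N + 1) * hRinv


theorem stmt_9 (N : ℕ) (hodd : Odd N) (hN : 5 ≤ N)
    (Δ : ℝ) (hΔ : Δ = Real.sqrt (N * (N - 4)))
    (ρ : ℝ) (hρ : ρ = ((N : ℝ) - 2 + Δ) / 2)
    (q : ℕ) (hq1 : 1 ≤ q) (hq2 : q ≤ N - 1) :
    (1 / (N : ℝ)) * ∑ j ∈ Finset.Icc 1 (N - 1),
        2 * (1 - Real.cos (2 * π * j * q / N)) /
          (((N : ℝ) - 2) + 2 * Real.cos (2 * π * j / N))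
      = (2 / (Δ * (ρ ^ N + 1))) *
          (ρ ^ N - 1 + (-1 : ℝ) ^ q * (ρ ^ q - ρ ^ (N - q))) := by
  have hN0 : N ≠ 0 := by omega
  have hqN : q < N := by omega
  have hNR : (5 : ℝ) ≤ (N : ℝ) := by exact_mod_cast hN
  have hΔsq : Δ ^ 2 = ((N : ℝ) - 2) ^ 2 - 4 := by
    rw [hΔ, Real.sq_sqrt (by nlinarith)]; ring
  have hΔpos : 0 < Δ := by
    rw [hΔ]; apply Real.sqrt_pos.mpr; nlinarith
  have hρpos : 0 < ρ := by rw [hρ]; nlinarith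
  have hρ0 : ρ ≠ 0 := ne_of_gt hρpos
  have hquad : ρ ^ 2 - ((N : ℝ) - 2) * ρ + 1 = 0 := by
    rw [hρ]; linear_combination hΔsq / 4
  have hinv : ρ⁻¹ = (N : ℝ) - 2 - ρ := by
    field_simp
    linear_combination hquad
  have hsum : ρ + ρ⁻¹ = (N : ℝ) - 2 := by rw [hinv]; ring
  have hdiff : ρ - ρ⁻¹ = Δ := by rw [hinv, hρ]; ring
  have hρN1pos : 0 < ρ ^ N + 1 := by positivity
  -- cast to ℂ
  rw [← Complex.ofReal_inj]
  push_cast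
  have hR0 : (ρ : ℂ) ≠ 0 := Complex.ofReal_ne_zero.mpr hρ0
  have hRsum : (ρ : ℂ) + (ρ : ℂ)⁻¹ = (N : ℂ) - 2 := by
    have := congrArg Complex.ofReal hsum
    push_cast at this
    exact this
  have hRdiff : (ρ : ℂ) - (ρ : ℂ)⁻¹ = (Δ : ℂ) := by
    have := congrArg Complex.ofReal hdiff
    push_cast at this
    exact this
  have hRN1 : (ρ : ℂ) ^ N + 1 ≠ 0 := by
    have : ((ρ ^ N + 1 : ℝ) : ℂ) ≠ 0 := by
      exact_mod_cast ne_of_gt hρN1pos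
    push_cast at this
    exact this
  have hCc : (Δ : ℂ) * ((ρ : ℂ) ^ N + 1) ≠ 0 :=
    mul_ne_zero (Complex.ofReal_ne_zero.mpr (ne_of_gt hΔpos)) hRN1
  have hNC : (N : ℂ) ≠ 0 := Nat.cast_ne_zero.mpr hN0
  have hζ := Complex.isPrimitiveRoot_exp N hN0
  set ζ : ℂ := Complex.exp (2 * ↑π * Complex.I / ↑N) with hζdef
  have hζN : ζ ^ N = 1 := hζ.pow_eq_one
  -- Icc → range
  have hins : Finset.range N = insert 0 (Finset.Icc 1 (N - 1)) := by
    ext x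
    simp only [Finset.mem_range, Finset.mem_insert, Finset.mem_Icc]
    omega
  have hIcc : ∑ j ∈ Finset.Icc 1 (N - 1),
        2 * (1 - Complex.cos (2 * ↑π * ↑j * ↑q / ↑N)) /
          ((N : ℂ) - 2 + 2 * Complex.cos (2 * ↑π * ↑j / ↑N))
      = ∑ j ∈ Finset.range N,
        2 * (1 - Complex.cos (2 * ↑π * ↑j * ↑q / ↑N)) /
          ((N : ℂ) - 2 + 2 * Complex.cos (2 * ↑π * ↑j / ↑N)) := by
    rw [hins, Finset.sum_insert (by simp)]
    simp
  rw [hIcc]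
  -- per-j rewrite
  have hterm : ∀ j ∈ Finset.range N,
      2 * (1 - Complex.cos (2 * ↑π * ↑j * ↑q / ↑N)) /
          ((N : ℂ) - 2 + 2 * Complex.cos (2 * ↑π * ↑j / ↑N))
      = (∑ k ∈ Finset.range N, (-1 : ℂ) ^ k * ((ρ : ℂ) ^ (N - k) - (ρ : ℂ) ^ k) *
          (2 * (ζ ^ j) ^ k - (ζ ^ j) ^ (k + q) - (ζ ^ j) ^ (k + (N - q)))) /
          ((Δ : ℂ) * ((ρ : ℂ) ^ N + 1)) := by
    intro j _
    have hwN : (ζ ^ j) ^ N = 1 := by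
      rw [← pow_mul, mul_comm, pow_mul, hζN, one_pow]
    have hexp1 : Complex.exp ((2 * ↑π * ↑j / ↑N : ℂ) * Complex.I) = ζ ^ j := by
      rw [show (2 * (π : ℂ) * ↑j / ↑N) * Complex.I
            = (j : ℂ) * (2 * ↑π * Complex.I / ↑N) by ring, Complex.exp_nat_mul]
    have hcos1 : 2 * Complex.cos (2 * ↑π * ↑j / ↑N : ℂ) = ζ ^ j + (ζ ^ j)⁻¹ := by
      rw [Complex.two_cos, neg_mul, Complex.exp_neg, hexp1]
    have hexpq : Complex.exp ((2 * ↑π * ↑j * ↑q / ↑N : ℂ) * Complex.I) = (ζ ^ j) ^ q := by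
      rw [show (2 * (π : ℂ) * ↑j * ↑q / ↑N) * Complex.I
            = ((j * q : ℕ) : ℂ) * (2 * ↑π * Complex.I / ↑N) by push_cast; ring,
        Complex.exp_nat_mul]
      exact pow_mul ζ j q
    have hinvq : ((ζ ^ j) ^ q)⁻¹ = (ζ ^ j) ^ (N - q) := by
      apply inv_eq_of_mul_eq_one_right
      rw [← pow_add, show q + (N - q) = N from by omega, hwN]
    have hcosq : 2 * Complex.cos (2 * ↑π * ↑j * ↑q / ↑N : ℂ)
        = (ζ ^ j) ^ q + (ζ ^ j) ^ (N - q) := by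
      rw [Complex.two_cos, neg_mul, Complex.exp_neg, hexpq, hinvq]
    have hkey := aux_key N hodd (ρ : ℂ) (ζ ^ j) hR0 hwN
    have hD : ((N : ℂ) - 2 + 2 * Complex.cos (2 * ↑π * ↑j / ↑N : ℂ))
        = (ρ : ℂ) + (ρ : ℂ)⁻¹ + (ζ ^ j + (ζ ^ j)⁻¹) := by
      rw [hcos1, hRsum]
    have hDne : ((N : ℂ) - 2 + 2 * Complex.cos (2 * ↑π * ↑j / ↑N : ℂ)) ≠ 0 := by
      rw [hD]
      intro h
      rw [h, zero_mul] at hkey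
      exact hCc (by rw [← hRdiff]; exact hkey.symm)
    rw [div_eq_div_iff hDne hCc]
    have hS : (∑ k ∈ Finset.range N, (-1 : ℂ) ^ k * ((ρ : ℂ) ^ (N - k) - (ρ : ℂ) ^ k) *
          (2 * (ζ ^ j) ^ k - (ζ ^ j) ^ (k + q) - (ζ ^ j) ^ (k + (N - q))))
        = (2 - (ζ ^ j) ^ q - (ζ ^ j) ^ (N - q)) *
          ∑ k ∈ Finset.range N, (-1 : ℂ) ^ k * ((ρ : ℂ) ^ (N - k) - (ρ : ℂ) ^ k) * (ζ ^ j) ^ k := by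
      rw [Finset.mul_sum]
      apply Finset.sum_congr rfl
      intro k _
      rw [pow_add, pow_add]
      ring
    rw [hS, hD, ← hRdiff]
    linear_combination (-(2 - (ζ ^ j) ^ q - (ζ ^ j) ^ (N - q))) * hkey
      - (((ρ : ℂ) - (ρ : ℂ)⁻¹) * ((ρ : ℂ) ^ N + 1)) * hcosq
  rw [Finset.sum_congr rfl hterm, ← Finset.sum_div, Finset.sum_comm]
  -- orthogonality
  have hj : ∀ k ∈ Finset.range N,
      ∑ j ∈ Finset.range N, (-1 : ℂ) ^ k * ((ρ : ℂ) ^ (N - k) - (ρ : ℂ) ^ k) *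
          (2 * (ζ ^ j) ^ k - (ζ ^ j) ^ (k + q) - (ζ ^ j) ^ (k + (N - q)))
      = (-1 : ℂ) ^ k * ((ρ : ℂ) ^ (N - k) - (ρ : ℂ) ^ k) *
          (2 * (if N ∣ k then (N : ℂ) else 0) - (if N ∣ k + q then (N : ℂ) else 0)
            - (if N ∣ k + (N - q) then (N : ℂ) else 0)) := by
    intro k _
    rw [← Finset.mul_sum]
    congr 1
    rw [Finset.sum_sub_distrib, Finset.sum_sub_distrib, ← Finset.mul_sum,
      aux_orth N hN0 k, aux_orth N hN0 (k + q), aux_orth N hN0 (k + (N - q))]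
  rw [Finset.sum_congr rfl hj]
  -- evaluate the three delta sums
  have hval : ∑ k ∈ Finset.range N, (-1 : ℂ) ^ k * ((ρ : ℂ) ^ (N - k) - (ρ : ℂ) ^ k) *
          (2 * (if N ∣ k then (N : ℂ) else 0) - (if N ∣ k + q then (N : ℂ) else 0)
            - (if N ∣ k + (N - q) then (N : ℂ) else 0))
      = 2 * (N : ℂ) * ((ρ : ℂ) ^ N - 1)
        - (N : ℂ) * ((-1 : ℂ) ^ (N - q) * ((ρ : ℂ) ^ q - (ρ : ℂ) ^ (N - q)))
        - (N : ℂ) * ((-1 : ℂ) ^ q * ((ρ : ℂ) ^ (N - q) - (ρ : ℂ) ^ q)) := by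
    have hsplit : ∀ k ∈ Finset.range N,
        (-1 : ℂ) ^ k * ((ρ : ℂ) ^ (N - k) - (ρ : ℂ) ^ k) *
          (2 * (if N ∣ k then (N : ℂ) else 0) - (if N ∣ k + q then (N : ℂ) else 0)
            - (if N ∣ k + (N - q) then (N : ℂ) else 0))
        = (-1 : ℂ) ^ k * ((ρ : ℂ) ^ (N - k) - (ρ : ℂ) ^ k) * (2 * (if N ∣ k then (N : ℂ) else 0))
          - (-1 : ℂ) ^ k * ((ρ : ℂ) ^ (N - k) - (ρ : ℂ) ^ k) * (if N ∣ k + q then (N : ℂ) else 0)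
          - (-1 : ℂ) ^ k * ((ρ : ℂ) ^ (N - k) - (ρ : ℂ) ^ k) * (if N ∣ k + (N - q) then (N : ℂ) else 0) := by
      intro k _; ring
    rw [Finset.sum_congr rfl hsplit, Finset.sum_sub_distrib, Finset.sum_sub_distrib]
    have e1 : ∑ k ∈ Finset.range N, (-1 : ℂ) ^ k * ((ρ : ℂ) ^ (N - k) - (ρ : ℂ) ^ k) *
          (2 * (if N ∣ k then (N : ℂ) else 0)) = 2 * (N : ℂ) * ((ρ : ℂ) ^ N - 1) := by
      rw [Finset.sum_eq_single 0]
      · rw [if_pos (dvd_zero N)]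
        simp
        ring
      · intro k hk hk0
        rw [if_neg, mul_zero, mul_zero]
        intro hdvd
        exact hk0 (Nat.eq_zero_of_dvd_of_lt hdvd (Finset.mem_range.mp hk))
      · intro h
        exact absurd (Finset.mem_range.mpr (by omega)) h
    have e2 : ∑ k ∈ Finset.range N, (-1 : ℂ) ^ k * ((ρ : ℂ) ^ (N - k) - (ρ : ℂ) ^ k) *
          (if N ∣ k + q then (N : ℂ) else 0)
        = (-1 : ℂ) ^ (N - q) * ((ρ : ℂ) ^ q - (ρ : ℂ) ^ (N - q)) * (N : ℂ) := by
      rw [Finset.sum_eq_single (N - q)]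
      · rw [if_pos (by rw [show N - q + q = N from by omega]), show N - (N - q) = q from by omega]
      · intro k hk hk0
        rw [if_neg, mul_zero]
        intro hdvd
        have : k + q = N := dvd_eq_self N (k + q) hdvd (by omega)
          (by have := Finset.mem_range.mp hk; omega)
        omega
      · intro h
        exact absurd (Finset.mem_range.mpr (by omega)) h
    have e3 : ∑ k ∈ Finset.range N, (-1 : ℂ) ^ k * ((ρ : ℂ) ^ (N - k) - (ρ : ℂ) ^ k) *
          (if N ∣ k + (N - q) then (N : ℂ) else 0)
        = (-1 : ℂ) ^ q * ((ρ : ℂ) ^ (N - q) - (ρ : ℂ) ^ q) * (N : ℂ) := by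
      rw [Finset.sum_eq_single q]
      · rw [if_pos (by rw [show q + (N - q) = N from by omega])]
      · intro k hk hk0
        rw [if_neg, mul_zero]
        intro hdvd
        have : k + (N - q) = N := dvd_eq_self N (k + (N - q)) hdvd (by omega)
          (by have := Finset.mem_range.mp hk; omega)
        omega
      · intro h
        exact absurd (Finset.mem_range.mpr (by omega)) h
    rw [e1, e2, e3]
    ring
  rw [hval]
  have hsign : (-1 : ℂ) ^ (N - q) = -(-1 : ℂ) ^ q := by
    have h1 : (-1 : ℂ) ^ (N - q) * (-1 : ℂ) ^ q = -1 := by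
      rw [← pow_add, show N - q + q = N from by omega]
      exact hodd.neg_one_pow
    have h2 : (-1 : ℂ) ^ q * (-1 : ℂ) ^ q = 1 := by
      rw [← pow_add]
      exact Even.neg_one_pow ⟨q, rfl⟩
    calc (-1 : ℂ) ^ (N - q) = (-1 : ℂ) ^ (N - q) * ((-1 : ℂ) ^ q * (-1 : ℂ) ^ q) := by
          rw [h2, mul_one]
      _ = ((-1 : ℂ) ^ (N - q) * (-1 : ℂ) ^ q) * (-1 : ℂ) ^ q := by ring
      _ = -(-1 : ℂ) ^ q := by rw [h1]; ring
  rw [hsign]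
  field_simp
  ring
end

section
/- Let N ≥ 5 be odd and q an integer with 1 ≤ q ≤ N-1, and let ρ = (N-2+√(N(N-4)))/2. Then ρ^N - 1 + (-1)^q (ρ^q - ρ^{N-q}) > 0. -/
theorem stmt_11 (N : ℕ) (hodd : Odd N) (hN : 5 ≤ N)
    (ρ : ℝ) (hρ : ρ = ((N : ℝ) - 2 + Real.sqrt (N * (N - 4))) / 2)
    (q : ℕ) (hq1 : 1 ≤ q) (hq2 : q ≤ N - 1) :
    0 < ρ ^ N - 1 + (-1 : ℝ) ^ q * (ρ ^ q - ρ ^ (N - q)) := by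
  have hN5 : (5 : ℝ) ≤ (N : ℝ) := by exact_mod_cast hN
  have hs : 0 ≤ Real.sqrt (N * (N - 4)) := Real.sqrt_nonneg _
  have hρ1 : 1 < ρ := by rw [hρ]; linarith
  have hqN : q < N := lt_of_le_of_lt hq2 (Nat.sub_lt (by omega) one_pos)
  rcases Nat.even_or_odd q with he | ho
  · rw [he.neg_one_pow]
    have h1 : ρ ^ (N - q) < ρ ^ N := pow_lt_pow_right₀ hρ1 (by omega)
    have h2 : 1 < ρ ^ q := one_lt_pow₀ hρ1 (by omega)
    linarith
  · rw [ho.neg_one_pow]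
    have h1 : ρ ^ q < ρ ^ N := pow_lt_pow_right₀ hρ1 hqN
    have h2 : 1 < ρ ^ (N - q) := one_lt_pow₀ hρ1 (by omega)
    linarith
end

section
/- Let N ≥ 5 be odd, ρ = (N-2+√(N(N-4)))/2, Δ = √(N(N-4)). Then the Kirchhoff index Kf = (N/(Δ(ρ^N+1))) ((N-1)(ρ^N-1) + 2(ρ^N-ρ)/(ρ+1)) satisfies Kf = N ∑_{j=1}^{N-1} 1/((N-2) + 2 cos(2πj/N)). -/
open Polynomial Finset Real

lemma st19_deriv (N : ℕ) (hN : 0 < N) (w : ℂ) :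
    ∑ η ∈ nthRootsFinset N (1:ℂ), ∏ η' ∈ (nthRootsFinset N (1:ℂ)).erase η, (w - η')
      = N * w ^ (N - 1) := by
  classical
  have h := Complex.isPrimitiveRoot_exp N hN.ne'
  have h1 := Polynomial.X_pow_sub_one_eq_prod hN h
  have h2 := congrArg Polynomial.derivative h1
  rw [Finset.prod_eq_multiset_prod, Polynomial.derivative_prod] at h2
  have h2' : Polynomial.derivative ((X : ℂ[X]) ^ N - 1)
      = ∑ η ∈ nthRootsFinset N (1:ℂ),
          (∏ η' ∈ (nthRootsFinset N (1:ℂ)).erase η, (X - C η')) := by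
    rw [h2, Finset.sum_eq_multiset_sum]
    congr 1
    refine Multiset.map_congr rfl fun η hη => ?_
    rw [← Finset.erase_val, ← Finset.prod_eq_multiset_prod]
    simp
  have h3 := congrArg (Polynomial.eval w) h2'
  simp only [derivative_sub, derivative_one, derivative_X_pow, sub_zero,
    eval_mul, eval_pow, eval_X, eval_natCast, eval_finset_sum, eval_prod,
    eval_sub, eval_C] at h3
  simpa using h3.symm

lemma st19_prod (N : ℕ) (hN : 0 < N) (w : ℂ) :
    ∏ η ∈ nthRootsFinset N (1:ℂ), (w - η) = w ^ N - 1 := by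
  have h := Complex.isPrimitiveRoot_exp N hN.ne'
  have h1 := Polynomial.X_pow_sub_one_eq_prod hN h
  have h3 := congrArg (Polynomial.eval w) h1
  simp only [eval_sub, eval_pow, eval_X, eval_one, eval_prod, eval_C] at h3
  exact h3.symm

lemma st19_sum_inv (N : ℕ) (hN : 0 < N) (w : ℂ) (hw : w ^ N ≠ 1) :
    ∑ η ∈ nthRootsFinset N (1:ℂ), (w - η)⁻¹ = N * w ^ (N - 1) / (w ^ N - 1) := by
  have hne : (w ^ N - 1) ≠ 0 := sub_ne_zero.2 hw
  have hterm : ∀ η ∈ nthRootsFinset N (1:ℂ),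
      (w - η)⁻¹ = (∏ η' ∈ (nthRootsFinset N (1:ℂ)).erase η, (w - η')) / (w ^ N - 1) := by
    intro η hη
    have hprod : (w - η) * ∏ η' ∈ (nthRootsFinset N (1:ℂ)).erase η, (w - η')
        = w ^ N - 1 := by
      rw [Finset.mul_prod_erase _ _ hη, st19_prod N hN w]
    have hwη : w - η ≠ 0 := by
      intro h0
      apply hw
      have : w = η := by linear_combination h0
      rw [this]
      exact (Polynomial.mem_nthRootsFinset hN _).mp hη
    rw [eq_div_iff hne, ← hprod]
    exact inv_mul_cancel_left₀ hwη _
  rw [Finset.sum_congr rfl hterm, ← Finset.sum_div, st19_deriv N hN w]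

lemma st19_complex (N : ℕ) (hodd : Odd N) (hN5 : 5 ≤ N) (ρ : ℝ) (hρ1 : 1 < ρ) :
    ∑ η ∈ nthRootsFinset N (1:ℂ), ((ρ:ℂ) + (ρ:ℂ)⁻¹ + (η + η⁻¹))⁻¹
      = N * (ρ:ℂ) * ((ρ:ℂ)^N - 1) / ((((ρ:ℂ)^2 - 1)) * ((ρ:ℂ)^N + 1)) := by
  have hNpos : 0 < N := by omega
  set c : ℂ := (ρ:ℂ) with hc
  have hρ0 : (0:ℝ) < ρ := by linarith
  have hc0 : c ≠ 0 := by
    simp [hc, Complex.ofReal_ne_zero]; positivity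
  have hc2 : c^2 - 1 ≠ 0 := by
    have h2 : (ρ:ℝ)^2 - 1 ≠ 0 := by nlinarith
    have : c^2 - 1 = ((ρ^2 - 1 : ℝ) : ℂ) := by push_cast; ring
    rw [this]; exact_mod_cast h2
  have hρN1 : (0:ℝ) < ρ^N := pow_pos hρ0 N
  have hcN : c^N + 1 ≠ 0 := by
    have h2 : (ρ:ℝ)^N + 1 ≠ 0 := by positivity
    have : c^N + 1 = ((ρ^N + 1 : ℝ) : ℂ) := by push_cast; ring
    rw [this]; exact_mod_cast h2
  have hev : Even (N - 1) := Nat.Odd.sub_odd hodd odd_one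
  have hwc : (-c)^N ≠ 1 := by
    rw [hodd.neg_pow, show c^N = ((ρ^N : ℝ) : ℂ) by push_cast; ring]
    intro h
    rw [← Complex.ofReal_neg, ← Complex.ofReal_one, Complex.ofReal_inj] at h
    nlinarith
  have hA : ∑ η ∈ nthRootsFinset N (1:ℂ), (η + c)⁻¹ = N * c^(N-1) / (c^N + 1) := by
    have h := st19_sum_inv N hNpos (-c) hwc
    have h2 : ∀ η ∈ nthRootsFinset N (1:ℂ), (-c - η)⁻¹ = -(η + c)⁻¹ := by
      intro η _; rw [show -c - η = -(η + c) by ring, inv_neg]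
    rw [Finset.sum_congr rfl h2, Finset.sum_neg_distrib] at h
    rw [hev.neg_pow, hodd.neg_pow] at h
    rw [neg_eq_iff_eq_neg.mp h, show (-c^N - 1 : ℂ) = -(c^N + 1) by ring, div_neg, neg_neg]
  have hρi : c⁻¹ = ((ρ⁻¹ : ℝ) : ℂ) := by push_cast; ring
  have hwci : (-c⁻¹)^N ≠ 1 := by
    rw [hodd.neg_pow, hρi]
    intro h
    rw [← Complex.ofReal_pow, ← Complex.ofReal_neg, ← Complex.ofReal_one,
      Complex.ofReal_inj] at h
    have : (0:ℝ) < ρ⁻¹^N := pow_pos (by positivity) N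
    nlinarith
  have hciN : (c⁻¹)^N + 1 ≠ 0 := by
    rw [hρi]
    have h2 : (ρ⁻¹:ℝ)^N + 1 ≠ 0 := by positivity
    intro h
    rw [← Complex.ofReal_pow, ← Complex.ofReal_one, ← Complex.ofReal_add,
      Complex.ofReal_eq_zero] at h
    exact h2 h
  have hB : ∑ η ∈ nthRootsFinset N (1:ℂ), (η + c⁻¹)⁻¹ = N * (c⁻¹)^(N-1) / ((c⁻¹)^N + 1) := by
    have h := st19_sum_inv N hNpos (-c⁻¹) hwci
    have h2 : ∀ η ∈ nthRootsFinset N (1:ℂ), (-c⁻¹ - η)⁻¹ = -(η + c⁻¹)⁻¹ := by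
      intro η _; rw [show -c⁻¹ - η = -(η + c⁻¹) by ring, inv_neg]
    rw [Finset.sum_congr rfl h2, Finset.sum_neg_distrib] at h
    rw [hev.neg_pow, hodd.neg_pow] at h
    rw [neg_eq_iff_eq_neg.mp h,
      show (-(c⁻¹)^N - 1 : ℂ) = -((c⁻¹)^N + 1) by ring, div_neg, neg_neg]
  have hterm : ∀ η ∈ nthRootsFinset N (1:ℂ),
      (c + c⁻¹ + (η + η⁻¹))⁻¹
        = c^2/(c^2-1) * (η + c)⁻¹ - 1/(c^2-1) * (η + c⁻¹)⁻¹ := by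
    intro η hη
    have hη0 : η ≠ 0 := Polynomial.ne_zero_of_mem_nthRootsFinset one_ne_zero hη
    have habs : ‖η‖ = 1 := by
      have hpow : η ^ N = 1 := (Polynomial.mem_nthRootsFinset hNpos _).mp hη
      have hpa : ‖η‖ ^ N = 1 := by rw [← norm_pow, hpow, norm_one]
      rcases lt_trichotomy ‖η‖ 1 with h | h | h
      · have := pow_lt_one₀ (norm_nonneg η) h hNpos.ne'; linarith
      · exact h
      · have := one_lt_pow₀ h hNpos.ne'; linarith
    have hηc : η + c ≠ 0 := by
      intro h
      have hc' : η = -c := by linear_combination h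
      rw [hc', norm_neg] at habs
      simp only [hc, Complex.norm_real, Real.norm_eq_abs] at habs
      rw [abs_of_pos hρ0] at habs
      linarith
    have hηci : η + c⁻¹ ≠ 0 := by
      intro h
      have hc' : η = -c⁻¹ := by linear_combination h
      rw [hc', norm_neg, norm_inv] at habs
      simp only [hc, Complex.norm_real, Real.norm_eq_abs] at habs
      rw [abs_of_pos hρ0, inv_eq_one] at habs
      linarith
    have r1 : η + c⁻¹ = (c*η + 1)/c := by field_simp
    have hcη1 : c*η + 1 ≠ 0 := by
      intro h; apply hηci; rw [r1, h, zero_div]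
    have r2 : c + c⁻¹ + (η + η⁻¹) = (η + c) * (c*η + 1) / (c*η) := by
      field_simp; ring
    rw [r2, inv_div, r1, inv_div]
    field_simp
    ring
  rw [Finset.sum_congr rfl hterm, Finset.sum_sub_distrib, ← Finset.mul_sum, ← Finset.mul_sum,
    hA, hB]
  have hNsplit : c^N = c^(N-1) * c := by
    rw [← pow_succ]; congr 1; omega
  rw [inv_pow, inv_pow, hNsplit]
  set u := c^(N-1) with hu
  have hu0 : u ≠ 0 := pow_ne_zero _ hc0
  clear_value u
  have huc : u * c + 1 ≠ 0 := by rw [← hNsplit]; exact hcN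
  have huci : (u * c)⁻¹ + 1 ≠ 0 := by
    rw [mul_inv]
    intro h
    apply huc
    have : (u * c) * (u⁻¹ * c⁻¹ + 1) = 1 + u * c := by field_simp
    rw [h, mul_zero] at this
    linear_combination -this
  have e3 : (N:ℂ) * u⁻¹ / ((u*c)⁻¹ + 1) = (N:ℂ) * c / (u*c+1) := by
    rw [div_eq_div_iff huci huc]
    field_simp
    ring
  rw [e3, div_mul_div_comm, div_mul_div_comm, div_sub_div_same,
    div_eq_div_iff (mul_ne_zero hc2 huc) (mul_ne_zero hc2 huc)]
  ring

lemma st19_bridge (N : ℕ) (hN : 0 < N) (a : ℝ) :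
    ∑ η ∈ nthRootsFinset N (1:ℂ), ((a:ℂ) + (η + η⁻¹))⁻¹
      = ((a:ℂ) + 2)⁻¹
        + ∑ j ∈ Finset.Icc 1 (N-1), ((a:ℂ) + 2 * (Real.cos (2*π*j/N) : ℝ))⁻¹ := by
  classical
  set ζ : ℂ := Complex.exp (2 * π * Complex.I / N) with hζ
  have hprim : IsPrimitiveRoot ζ N := Complex.isPrimitiveRoot_exp N hN.ne'
  -- step 1 : sum over roots = sum over range
  have h1 : ∑ η ∈ nthRootsFinset N (1:ℂ), ((a:ℂ) + (η + η⁻¹))⁻¹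
      = ∑ j ∈ Finset.range N, ((a:ℂ) + (ζ^j + (ζ^j)⁻¹))⁻¹ := by
    refine (Finset.sum_bij (fun j _ => ζ^j) ?_ ?_ ?_ ?_).symm
    · intro j hj
      exact (Polynomial.mem_nthRootsFinset hN _).mpr
        (by rw [← pow_mul, mul_comm, pow_mul, hprim.pow_eq_one, one_pow])
    · intro i hi j hj hij
      exact hprim.pow_inj (Finset.mem_range.mp hi) (Finset.mem_range.mp hj) hij
    · intro η hη
      haveI : NeZero N := ⟨hN.ne'⟩
      obtain ⟨i, hi, hieq⟩ := hprim.eq_pow_of_pow_eq_one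
        ((Polynomial.mem_nthRootsFinset hN _).mp hη)
      exact ⟨i, Finset.mem_range.mpr hi, hieq⟩
    · intro j hj; rfl
  -- step 2 : each term is the cosine
  have h2 : ∀ j : ℕ, ζ^j + (ζ^j)⁻¹ = 2 * ((Real.cos (2*π*j/N) : ℝ) : ℂ) := by
    intro j
    have hz : ζ^j = Complex.exp (((2*π*j/N : ℝ) : ℂ) * Complex.I) := by
      rw [hζ, ← Complex.exp_nat_mul]
      congr 1
      push_cast
      ring
    rw [hz, ← Complex.exp_neg, ← neg_mul, Complex.exp_mul_I, Complex.exp_mul_I,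
      Complex.cos_neg, Complex.sin_neg, Complex.ofReal_cos]
    ring
  -- step 3 : split off j = 0
  have h3 : Finset.range N = Finset.Icc 0 (N-1) := by
    rw [Finset.range_eq_Ico, ← Finset.Ico_add_one_right_eq_Icc]
    congr 1
    omega
  rw [h1, h3]
  rw [← Finset.add_sum_erase _ _ (Finset.mem_Icc.mpr ⟨le_refl 0, Nat.zero_le _⟩)]
  rw [Finset.Icc_erase_left]
  have h4 : Finset.Ioc 0 (N-1) = Finset.Icc 1 (N-1) := by
    rw [← Finset.Icc_add_one_left_eq_Ioc]; norm_num
  rw [h4]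
  congr 1
  · rw [h2 0]
    norm_num
  · refine Finset.sum_congr rfl fun j hj => ?_
    rw [h2 j]


open Real

theorem stmt_19 (N : ℕ) (hodd : Odd N) (hN : 5 ≤ N)
    (Δ : ℝ) (hΔ : Δ = Real.sqrt (N * (N - 4)))
    (ρ : ℝ) (hρ : ρ = ((N : ℝ) - 2 + Δ) / 2) :
    ((N : ℝ) / (Δ * (ρ ^ N + 1))) *
        (((N : ℝ) - 1) * (ρ ^ N - 1) + 2 * (ρ ^ N - ρ) / (ρ + 1))
      = (N : ℝ) * ∑ j ∈ Finset.Icc 1 (N - 1),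
          1 / (((N : ℝ) - 2) + 2 * Real.cos (2 * π * j / N)) := by
  have hNpos : 0 < N := by omega
  have hNR : (5:ℝ) ≤ (N:ℝ) := by exact_mod_cast hN
  have hNN : (0:ℝ) < (N:ℝ) * ((N:ℝ) - 4) := by nlinarith
  have hΔpos : 0 < Δ := by rw [hΔ]; exact Real.sqrt_pos.mpr hNN
  have hΔsq : Δ^2 = (N:ℝ) * ((N:ℝ) - 4) := by
    rw [hΔ, Real.sq_sqrt hNN.le]
  have hρ1 : 1 < ρ := by rw [hρ]; linarith
  have hρ0 : (0:ℝ) < ρ := by linarith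
  have hρne : ρ ≠ 0 := hρ0.ne'
  have hquad : ρ^2 - ((N:ℝ)-2)*ρ + 1 = 0 := by
    rw [hρ]; linear_combination hΔsq / 4
  have hainv : ρ + ρ⁻¹ = (N:ℝ) - 2 := by
    field_simp
    linear_combination hquad
  have hΔ2 : Δ = 2*ρ - ((N:ℝ)-2) := by rw [hρ]; ring
  have hΔρ : Δ * ρ = ρ^2 - 1 := by linear_combination ρ * hΔ2 + hquad
  have hρN1 : (0:ℝ) < ρ^N := pow_pos hρ0 N
  have hρ2ne : ρ^2 - 1 ≠ 0 := by nlinarith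
  have hρp1 : ρ + 1 ≠ 0 := by positivity
  have hρNne : ρ^N + 1 ≠ 0 := by positivity
  have hNne : (N:ℝ) ≠ 0 := by positivity
  set T : ℝ := (N:ℝ)*ρ*(ρ^N - 1)/((ρ^2 - 1)*(ρ^N + 1)) with hT
  have hsum : ∑ j ∈ Finset.Icc 1 (N - 1),
      1 / (((N : ℝ) - 2) + 2 * Real.cos (2 * π * j / N)) = T - 1/N := by
    apply Complex.ofReal_injective
    have hC := st19_complex N hodd hN ρ hρ1
    have hB := st19_bridge N hNpos ((N:ℝ)-2)
    have hac : (((N:ℝ)-2 : ℝ):ℂ) = (ρ:ℂ) + (ρ:ℂ)⁻¹ := by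
      rw [← hainv]; push_cast; ring
    rw [hac] at hB
    rw [hC] at hB
    -- hB : value = (c+c⁻¹+2)⁻¹ + Icc sum (in ℂ)
    have hc2 : ((ρ:ℂ) + (ρ:ℂ)⁻¹ + 2) = (N:ℂ) := by
      rw [← hac]; push_cast; ring
    rw [hc2] at hB
    have hlhs : ((∑ j ∈ Finset.Icc 1 (N - 1),
        1 / (((N : ℝ) - 2) + 2 * Real.cos (2 * π * j / N)) : ℝ) : ℂ)
        = ∑ j ∈ Finset.Icc 1 (N-1),
            ((ρ:ℂ) + (ρ:ℂ)⁻¹ + 2 * ((Real.cos (2*π*j/N) : ℝ) : ℂ))⁻¹ := by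
      push_cast
      refine Finset.sum_congr rfl fun j hj => ?_
      rw [one_div]
      congr 1
      rw [← hac]
      push_cast
      ring
    rw [hlhs]
    have hrhs : ((T - 1/N : ℝ) : ℂ)
        = (N:ℂ) * (ρ:ℂ) * ((ρ:ℂ)^N - 1) / ((((ρ:ℂ)^2 - 1)) * ((ρ:ℂ)^N + 1)) - ((N:ℂ))⁻¹ := by
      rw [hT]
      push_cast
      ring
    rw [hrhs]
    linear_combination -hB
  rw [hsum]
  have hΔval : Δ = (ρ^2 - 1)/ρ := by rw [eq_div_iff hρne]; linear_combination hΔρ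
  have hNval : (N:ℝ) = (ρ+1)^2/ρ := by
    rw [eq_div_iff hρne]
    linear_combination -hquad
  rw [hΔval, hT, hNval]
  field_simp
  ring
end
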